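/- Let K be an algebraically closed field of characteristic zero and P ∈ K[x,y] satisfy P_{xy}^2 − P_{xx} P_{yy} = 0 (i.e., the Hessian determinant of P vanishes). Then there exist constants a, b, c_1, c_2 ∈ K and a univariate polynomial f ∈ K[t] with f(0) = 0 such that P_y = b·f(ax + by) + c_2 and P_x = a·f(ax + by) − c_1. -/

import Mathlib

/-!
Write `r, w, s` for `P_xx, P_xy, P_yy`, so that `w² = r s`. The heart of the proof is that the
Hessian has a constant kernel vector `(b, -a) ≠ 0`. When `w ≠ 0`, factor `r = e m²`, `w = e m n`,
`s = e n²` with `m, n` coprime. The compatibility conditions `∂_y r = ∂_x w`, `∂_y w = ∂_x s` make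
`m` and `n` Darboux polynomials of the vector field `n ∂_x - m ∂_y` with a common cofactor `t`;
coprimality forces `m = a - k y`, `n = k x + b`, and then `e` is an eigenvector of the affine
Euler operator `n ∂_x - m ∂_y` with eigenvalue `-3k`, which is impossible unless `k = 0`.

Once `b P_xx = a P_xy` and `b P_xy = a P_yy`, the derivation `b ∂_x - a ∂_y` kills `P_x` and
`P_y`, so they are polynomials in `a x + b y`, and `b P_x - a P_y` is a constant.
-/

open MvPolynomial

theorem IsRelPrime.exists_eq_mul_of_mul_eq_mul {R : Type*} [CommRing R] [IsDomain R]
    [DecompositionMonoid R] {m n x y : R} (hmn : IsRelPrime m n) (hm : m ≠ 0)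
    (h : n * x = m * y) : ∃ t, x = t * m ∧ y = t * n := by
  obtain ⟨t, rfl⟩ := hmn.dvd_of_dvd_mul_left ⟨y, h⟩
  exact ⟨t, mul_comm m t, mul_left_cancel₀ hm (by linear_combination -h)⟩

theorem exists_eq_mul_sq_of_sq_eq_mul {R : Type*} [CommRing R] [IsDomain R] [GCDMonoid R]
    {r w s : R} (hr : r ≠ 0) (h : w ^ 2 = r * s) :
    ∃ e m n : R, IsRelPrime m n ∧ r = e * m ^ 2 ∧ w = e * m * n ∧ s = e * n ^ 2 := by
  obtain ⟨m, n, hrm, hwn, hu⟩ := extract_gcd r w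
  set d := gcd r w
  have hd : d ≠ 0 := fun h0 => hr (by rw [hrm, h0, zero_mul])
  have hm : m ≠ 0 := fun h0 => hr (by rw [hrm, h0, mul_zero])
  have hmn : IsRelPrime m n := gcd_isUnit_iff_isRelPrime.mp hu
  rw [hrm, hwn] at h
  have hdn : d * n ^ 2 = m * s := mul_left_cancel₀ hd (by linear_combination h)
  obtain ⟨e, he⟩ := (hmn.pow_right (n := 2)).dvd_of_dvd_mul_right ⟨s, hdn⟩
  refine ⟨e, m, n, hmn, by rw [hrm, he]; ring, by rw [hwn, he]; ring, ?_⟩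
  exact mul_left_cancel₀ hm (by linear_combination -hdn + n ^ 2 * he)

namespace MvPolynomial

section General

variable {σ R : Type*}

theorem pderiv_pderiv_comm [CommRing R] (i j : σ) (p : MvPolynomial σ R) :
    pderiv i (pderiv j p) = pderiv j (pderiv i p) := by
  classical
  have h : ⁅pderiv i, pderiv j⁆ = (0 : Derivation R (MvPolynomial σ R) (MvPolynomial σ R)) :=
    derivation_ext fun k => by
      rw [Derivation.commutator_apply]
      simp [pderiv_X, Pi.single_apply, apply_ite]
  rw [← sub_eq_zero, ← Derivation.commutator_apply, h, Derivation.zero_apply]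

theorem pderiv_aeval [CommSemiring R] {τ : Type*} [Fintype σ] (ρ : σ → MvPolynomial τ R)
    (i : τ) (p : MvPolynomial σ R) :
    pderiv i (aeval ρ p) = ∑ j, aeval ρ (pderiv j p) * pderiv i (ρ j) := by
  classical
  induction p using MvPolynomial.induction_on with
  | C a => simp
  | add p q hp hq => simp only [map_add, hp, hq, add_mul, Finset.sum_add_distrib]
  | mul_X p k hp =>
    simp only [map_mul, aeval_X, pderiv_mul, hp, pderiv_X, map_add, add_mul,
      Finset.sum_add_distrib, Finset.sum_mul]
    simp [Pi.single_apply, apply_ite, mul_assoc, mul_comm, add_comm]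

theorem eq_C_of_forall_pderiv_eq_zero [CommSemiring R] [IsAddTorsionFree R]
    {p : MvPolynomial σ R} (h : ∀ i, pderiv i p = 0) : p = C (coeff 0 p) := by
  classical
  ext m
  rw [coeff_C]
  split_ifs with hm
  · rw [hm]
  obtain ⟨i, hi⟩ : ∃ i, m i ≠ 0 := by
    by_contra! h0
    exact hm (Finsupp.ext fun i => (h0 i).symm)
  have hle : Finsupp.single i 1 ≤ m := Finsupp.single_le_iff.mpr (Nat.one_le_iff_ne_zero.mpr hi)
  have := coeff_pderiv (i := i) p (m - Finsupp.single i 1)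
  rwa [h i, tsub_add_cancel_of_le hle, coeff_zero, eq_comm, ← Nat.cast_succ, mul_comm,
    ← nsmul_eq_mul, nsmul_eq_zero_iff_right (Nat.succ_ne_zero _)] at this

theorem totalDegree_pderiv_lt [CommSemiring R] {i : σ} {p : MvPolynomial σ R}
    (h : pderiv i p ≠ 0) : (pderiv i p).totalDegree < p.totalDegree := by
  obtain ⟨m, hm, hdeg⟩ := Finset.exists_mem_eq_sup _ (support_nonempty.mpr h)
    fun m : σ →₀ ℕ => m.degree
  have hcoeff : coeff (m + Finsupp.single i 1) p ≠ 0 := by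
    intro h0
    rw [mem_support_iff, coeff_pderiv, h0, zero_mul] at hm
    exact hm rfl
  calc (pderiv i p).totalDegree = m.degree := hdeg
    _ < (m + Finsupp.single i 1).degree := by simp
    _ ≤ p.totalDegree := le_totalDegree (mem_support_iff.mpr hcoeff)

theorem pderiv_eq_zero_of_dvd_pderiv [CommSemiring R] [NoZeroDivisors R] {i : σ}
    {p : MvPolynomial σ R} (h : p ∣ pderiv i p) : pderiv i p = 0 := by
  by_contra hne
  exact (totalDegree_le_of_dvd_of_isDomain h hne).not_gt (totalDegree_pderiv_lt hne)

theorem coeff_X_mul_pderiv [CommSemiring R] (i : σ) (m : σ →₀ ℕ) (p : MvPolynomial σ R) :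
    coeff m (X i * pderiv i p) = m i * coeff m p := by
  classical
  induction p using MvPolynomial.induction_on' with
  | monomial n a =>
    rw [X_mul_pderiv_monomial, coeff_smul, coeff_monomial]
    split_ifs with h <;> simp [h, nsmul_eq_mul]
  | add p q hp hq => simp [mul_add, hp, hq]

/-- On a top-degree monomial of `p` the operator `∑ (k Xᵢ + cᵢ) ∂ᵢ` acts as multiplication by
`k * deg`. -/
theorem eq_zero_of_affine_euler_eq_C_mul [CommRing R] [NoZeroDivisors R] [Fintype σ] {k μ : R}
    (c : σ → R) (hμ : ∀ d : ℕ, μ ≠ k * d) {p : MvPolynomial σ R}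
    (h : ∑ i, (C k * X i + C (c i)) * pderiv i p = C μ * p) : p = 0 := by
  by_contra hp
  obtain ⟨m, hm, hdeg⟩ := Finset.exists_mem_eq_sup _ (support_nonempty.mpr hp)
    fun m : σ →₀ ℕ => m.degree
  have htop : ∀ i, coeff m (pderiv i p) = 0 := fun i => by
    rw [coeff_pderiv, coeff_eq_zero_of_totalDegree_lt, zero_mul]
    change p.totalDegree < (m + Finsupp.single i 1).degree
    rw [show p.totalDegree = m.degree from hdeg]
    simp
  have := congr(coeff m $h)
  simp only [coeff_sum, add_mul, coeff_add, mul_assoc, coeff_C_mul, coeff_X_mul_pderiv, htop,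
    mul_zero, add_zero] at this
  rw [← Finset.mul_sum, ← Finset.sum_mul, ← Nat.cast_sum, ← Finsupp.degree_eq_sum, ← mul_assoc,
    ← sub_eq_zero, ← sub_mul] at this
  exact (mul_ne_zero (sub_ne_zero.mpr (hμ _).symm) (mem_support_iff.mp hm)) this

end General

section TwoVariables

variable {K : Type*} [Field K] [CharZero K]

theorem exists_eq_aeval_X_zero_of_pderiv_one_eq_zero {q : MvPolynomial (Fin 2) K}
    (h : pderiv 1 q = 0) : ∃ g : Polynomial K, q = Polynomial.aeval (X 0) g := by
  set e := Polynomial.Bivariate.equivMvPolynomial K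
  obtain ⟨p, rfl⟩ := e.surjective q
  have hp : Polynomial.derivative p = 0 := by
    rwa [Polynomial.Bivariate.pderiv_one_equivMvPolynomial, AddEquivClass.map_eq_zero_iff] at h
  refine ⟨p.coeff 0, ?_⟩
  rw [Polynomial.eq_C_of_derivative_eq_zero hp, Polynomial.coeff_C_zero]
  have : e.toAlgHom.comp Polynomial.CAlgHom = Polynomial.aeval (X 0 : MvPolynomial (Fin 2) K) :=
    Polynomial.algHom_ext (by simp [e])
  exact congr($this (p.coeff 0))

/-- `IsCoprime a b` just says `(a, b) ≠ 0`. A Bézout pair `c a + d b = 1` completes `a X₀ + b X₁`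
to a unimodular change of variables `φ` with inverse `ψ`, and `∂₁ (ψ q) = ψ (a ∂₁ q - b ∂₀ q)`. -/
theorem exists_eq_aeval_of_pderiv_eq {a b : K} (hab : IsCoprime a b)
    {q : MvPolynomial (Fin 2) K} (h : C b * pderiv 0 q = C a * pderiv 1 q) :
    ∃ g : Polynomial K, q = Polynomial.aeval (C a * X 0 + C b * X 1) g := by
  obtain ⟨c, d, hcd⟩ := hab
  have hcd' : C c * C a + C d * C b = (1 : MvPolynomial (Fin 2) K) := by
    rw [← C_mul, ← C_mul, ← C_add, hcd, C_1]
  set φ : MvPolynomial (Fin 2) K →ₐ[K] MvPolynomial (Fin 2) K :=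
    aeval ![C a * X 0 + C b * X 1, C (-d) * X 0 + C c * X 1]
  set ψ : MvPolynomial (Fin 2) K →ₐ[K] MvPolynomial (Fin 2) K :=
    aeval ![C c * X 0 - C b * X 1, C d * X 0 + C a * X 1]
  have hφψ : φ.comp ψ = AlgHom.id K _ := by
    refine algHom_ext <| Fin.forall_fin_two.mpr ⟨?_, ?_⟩ <;>
      simp only [φ, ψ, AlgHom.comp_apply, AlgHom.id_apply, aeval_X, map_add, map_sub, map_mul,
        algHom_C, algebraMap_eq, C_neg, Matrix.cons_val_zero, Matrix.cons_val_one,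
        Matrix.cons_val_fin_one]
    · linear_combination X 0 * hcd'
    · linear_combination X 1 * hcd'
  obtain ⟨g, hg⟩ : ∃ g : Polynomial K, ψ q = Polynomial.aeval (X 0) g := by
    apply exists_eq_aeval_X_zero_of_pderiv_one_eq_zero
    have hψ := congr(ψ $h)
    simp only [map_mul, algHom_C, algebraMap_eq] at hψ
    simp only [ψ, pderiv_aeval, Fin.sum_univ_two, Matrix.cons_val_zero, Matrix.cons_val_one,
      Matrix.cons_val_fin_one, map_add, map_sub, pderiv_C_mul, pderiv_X_self, pderiv_X_of_ne,
      ne_eq, zero_ne_one, not_false_eq_true]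
    linear_combination -hψ
  refine ⟨g, ?_⟩
  calc q = φ (ψ q) := congr($hφψ q).symm
    _ = _ := by rw [hg, ← Polynomial.aeval_algHom_apply]; simp [φ]

theorem exists_eq_affine_of_pderiv_eq_C {q : MvPolynomial (Fin 2) K} {α β : K}
    (h₀ : pderiv 0 q = C α) (h₁ : pderiv 1 q = C β) :
    ∃ γ : K, q = C α * X 0 + C β * X 1 + C γ := by
  have key := eq_C_of_forall_pderiv_eq_zero (p := q - (C α * X 0 + C β * X 1)) fun i => by
    fin_cases i <;> simp [h₀, h₁, pderiv_X]
  exact ⟨_, by linear_combination key⟩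

theorem exists_affine_of_darboux {m n t : MvPolynomial (Fin 2) K} (hmn : IsRelPrime m n)
    (hm : m ≠ 0) (hn : n ≠ 0) (htm : n * pderiv 0 m - m * pderiv 1 m = t * m)
    (htn : n * pderiv 0 n - m * pderiv 1 n = t * n) :
    ∃ k a b : K, t = C k ∧ m = C a - C k * X 1 ∧ n = C k * X 0 + C b := by
  have hm₀ : pderiv 0 m = 0 := pderiv_eq_zero_of_dvd_pderiv <|
    hmn.dvd_of_dvd_mul_left ⟨t + pderiv 1 m, by linear_combination htm⟩
  have hn₁ : pderiv 1 n = 0 := pderiv_eq_zero_of_dvd_pderiv <|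
    hmn.symm.dvd_of_dvd_mul_left ⟨pderiv 0 n - t, by linear_combination -htn⟩
  have hm₁ : pderiv 1 m = -t := mul_left_cancel₀ hm (by rw [hm₀] at htm; linear_combination -htm)
  have hn₀ : pderiv 0 n = t := mul_left_cancel₀ hn (by rw [hn₁] at htn; linear_combination htn)
  obtain ⟨k, rfl⟩ : ∃ k, t = C k := ⟨_, eq_C_of_forall_pderiv_eq_zero <| Fin.forall_fin_two.mpr
    ⟨by rw [← neg_neg t, ← hm₁, map_neg, pderiv_pderiv_comm, hm₀, map_zero, neg_zero],
      by rw [← hn₀, pderiv_pderiv_comm, hn₁, map_zero]⟩⟩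
  obtain ⟨a, ha⟩ := exists_eq_affine_of_pderiv_eq_C (q := m) (α := 0) (β := -k)
    (by rw [hm₀, C_0]) (by rw [hm₁, map_neg])
  obtain ⟨b, hb⟩ := exists_eq_affine_of_pderiv_eq_C (q := n) (α := k) (β := 0) hn₀
    (by rw [hn₁, C_0])
  exact ⟨k, a, b, rfl, by rw [ha, C_0, zero_mul, zero_add, map_neg]; ring, by rw [hb]; simp⟩

theorem exists_eq_C_of_hessian_eq_rank_one {P e m n : MvPolynomial (Fin 2) K}
    (hmn : IsRelPrime m n) (hemn : e * m * n ≠ 0) (hr : pderiv 0 (pderiv 0 P) = e * m ^ 2)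
    (hw : pderiv 0 (pderiv 1 P) = e * m * n) (hs : pderiv 1 (pderiv 1 P) = e * n ^ 2) :
    ∃ a b : K, m = C a ∧ n = C b := by
  have he : e ≠ 0 := left_ne_zero_of_mul (left_ne_zero_of_mul hemn)
  have hm : m ≠ 0 := right_ne_zero_of_mul (left_ne_zero_of_mul hemn)
  have hn : n ≠ 0 := right_ne_zero_of_mul hemn
  have hcurl₁ : pderiv 1 (e * m ^ 2) = pderiv 0 (e * m * n) := by
    rw [← hr, ← hw, pderiv_pderiv_comm 1 0, pderiv_pderiv_comm 1 0 P]
  have hcurl₂ : pderiv 1 (e * m * n) = pderiv 0 (e * n ^ 2) := by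
    rw [← hw, ← hs, pderiv_pderiv_comm 1 0]
  simp only [pderiv_mul, pderiv_pow, Nat.cast_ofNat, Nat.add_one_sub_one, pow_one]
    at hcurl₁ hcurl₂
  obtain ⟨t, htm, htn⟩ := hmn.exists_eq_mul_of_mul_eq_mul hm
    (x := n * pderiv 0 m - m * pderiv 1 m) (y := n * pderiv 0 n - m * pderiv 1 n)
    (mul_left_cancel₀ he (by linear_combination m * hcurl₂ - n * hcurl₁))
  have hDe : n * pderiv 0 e - m * pderiv 1 e = (pderiv 1 m - t - pderiv 0 n) * e :=
    mul_left_cancel₀ hm (by linear_combination -hcurl₁ - e * htm)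
  obtain ⟨k, a, b, rfl, rfl, rfl⟩ := exists_affine_of_darboux hmn hm hn htm htn
  have heuler : ∑ i, (C k * X i + C (![b, -a] i)) * pderiv i e = C (-3 * k) * e := by
    simp only [Fin.sum_univ_two, Matrix.cons_val_zero, Matrix.cons_val_one,
      Matrix.cons_val_fin_one, map_add, map_sub, map_mul, map_neg, map_ofNat, pderiv_C,
      pderiv_C_mul, pderiv_X_self] at hDe ⊢
    linear_combination hDe
  obtain rfl : k = 0 := by
    by_contra hk
    refine he (eq_zero_of_affine_euler_eq_C_mul _ (fun d hd => hk ?_) heuler)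
    have : k * ((d + 3 : ℕ) : K) = 0 := by push_cast; linear_combination -hd
    exact (mul_eq_zero.mp this).resolve_right (Nat.cast_ne_zero.mpr (by omega))
  exact ⟨a, b, by simp, by simp⟩

theorem exists_const_hessian_kernel {P : MvPolynomial (Fin 2) K}
    (h : pderiv 0 (pderiv 1 P) ^ 2 - pderiv 0 (pderiv 0 P) * pderiv 1 (pderiv 1 P) = 0) :
    ∃ a b : K, IsCoprime a b ∧
      C b * pderiv 0 (pderiv 0 P) = C a * pderiv 0 (pderiv 1 P) ∧
      C b * pderiv 0 (pderiv 1 P) = C a * pderiv 1 (pderiv 1 P) := by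
  rw [sub_eq_zero] at h
  by_cases hw : pderiv 0 (pderiv 1 P) = 0
  · rw [hw, zero_pow two_ne_zero, zero_eq_mul] at h
    rcases h with hr | hs
    · exact ⟨0, 1, ⟨0, 1, by simp⟩, by simp [hr, hw], by simp [hw]⟩
    · exact ⟨1, 0, ⟨1, 0, by simp⟩, by simp [hw], by simp [hs, hw]⟩
  let := UniqueFactorizationMonoid.toGCDMonoid (MvPolynomial (Fin 2) K)
  obtain ⟨e, m, n, hmn, hr, hw', hs⟩ :=
    exists_eq_mul_sq_of_sq_eq_mul (left_ne_zero_of_mul (h ▸ pow_ne_zero 2 hw)) h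
  obtain ⟨a, b, rfl, rfl⟩ := exists_eq_C_of_hessian_eq_rank_one hmn (hw' ▸ hw) hr hw' hs
  have ha : a ≠ 0 := by
    rintro rfl
    simp [hw'] at hw
  exact ⟨a, b, ⟨a⁻¹, 0, by simp [ha]⟩, by rw [hr, hw']; ring,
    by rw [hw', hs]; ring⟩

theorem exists_eq_aeval_of_const_hessian_kernel {P : MvPolynomial (Fin 2) K} {a b : K}
    (hab : IsCoprime a b) (h₁ : C b * pderiv 0 (pderiv 0 P) = C a * pderiv 0 (pderiv 1 P))
    (h₂ : C b * pderiv 0 (pderiv 1 P) = C a * pderiv 1 (pderiv 1 P)) :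
    ∃ (c₁ c₂ : K) (f : Polynomial K), f.coeff 0 = 0 ∧
      pderiv 1 P = C b * Polynomial.aeval (C a * X 0 + C b * X 1) f + C c₂ ∧
      pderiv 0 P = C a * Polynomial.aeval (C a * X 0 + C b * X 1) f - C c₁ := by
  obtain ⟨c, d, hcd⟩ := hab
  have hcd' : C c * C a + C d * C b = (1 : MvPolynomial (Fin 2) K) := by
    rw [← C_mul, ← C_mul, ← C_add, hcd, C_1]
  have hcomm : pderiv 1 (pderiv 0 P) = pderiv 0 (pderiv 1 P) := pderiv_pderiv_comm 1 0 P
  obtain ⟨g, hg⟩ := exists_eq_aeval_of_pderiv_eq ⟨c, d, hcd⟩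
    (q := C c * pderiv 0 P + C d * pderiv 1 P) (by
      simp only [map_add, pderiv_C_mul, hcomm]
      linear_combination C c * h₁ + C d * h₂)
  obtain ⟨γ, hγ⟩ : ∃ γ, C b * pderiv 0 P - C a * pderiv 1 P = C γ :=
    ⟨_, eq_C_of_forall_pderiv_eq_zero <| Fin.forall_fin_two.mpr
      ⟨by simp only [map_sub, pderiv_C_mul]; linear_combination h₁,
        by simp only [map_sub, pderiv_C_mul, hcomm]; linear_combination h₂⟩⟩
  -- With `F = c P_x + d P_y` and `c a + d b = 1`: `P_x = a F + d γ` and `P_y = b F - c γ`.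
  refine ⟨-(a * g.coeff 0 + d * γ), b * g.coeff 0 - c * γ, g - Polynomial.C (g.coeff 0),
    by simp, ?_, ?_⟩
  · simp only [map_sub, map_mul, Polynomial.aeval_C, algebraMap_eq]
    linear_combination C b * hg - C c * hγ - pderiv 1 P * hcd'
  · simp only [map_sub, map_mul, map_add, map_neg, Polynomial.aeval_C, algebraMap_eq]
    linear_combination C a * hg + C d * hγ - pderiv 0 P * hcd'

end TwoVariables

end MvPolynomial

theorem stmt_11_general (K : Type*) [Field K] [CharZero K]
    (P : MvPolynomial (Fin 2) K)
    (hhess : (pderiv (0 : Fin 2) (pderiv (1 : Fin 2) P)) ^ 2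
      - pderiv (0 : Fin 2) (pderiv (0 : Fin 2) P) * pderiv (1 : Fin 2) (pderiv (1 : Fin 2) P)
      = 0) :
    ∃ (a b c₁ c₂ : K) (f : Polynomial K), f.coeff 0 = 0 ∧
      pderiv (1 : Fin 2) P =
        MvPolynomial.C b * Polynomial.aeval
          (MvPolynomial.C a * MvPolynomial.X 0 + MvPolynomial.C b * MvPolynomial.X 1) f
        + MvPolynomial.C c₂ ∧
      pderiv (0 : Fin 2) P =
        MvPolynomial.C a * Polynomial.aeval
          (MvPolynomial.C a * MvPolynomial.X 0 + MvPolynomial.C b * MvPolynomial.X 1) f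
        - MvPolynomial.C c₁ := by
  obtain ⟨a, b, hab, h₁, h₂⟩ := exists_const_hessian_kernel hhess
  obtain ⟨c₁, c₂, f, hf, hv, hu⟩ := exists_eq_aeval_of_const_hessian_kernel hab h₁ h₂
  exact ⟨a, b, c₁, c₂, f, hf, hv, hu⟩

/-- If `P ∈ K[x,y]` (K algebraically closed, char 0) has vanishing Hessian
determinant `P_{xy}² − P_{xx}·P_{yy} = 0`, then there are constants `a, b, c₁, c₂ ∈ K` and
`f ∈ K[t]` with `f(0) = 0` such that `P_y = b·f(ax+by) + c₂` and `P_x = a·f(ax+by) − c₁`. -/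
theorem stmt_11 (K : Type*) [Field K] [IsAlgClosed K] [CharZero K]
    (P : MvPolynomial (Fin 2) K)
    (hhess : (pderiv (0 : Fin 2) (pderiv (1 : Fin 2) P)) ^ 2
      - pderiv (0 : Fin 2) (pderiv (0 : Fin 2) P) * pderiv (1 : Fin 2) (pderiv (1 : Fin 2) P)
      = 0) :
    ∃ (a b c₁ c₂ : K) (f : Polynomial K), f.coeff 0 = 0 ∧
      pderiv (1 : Fin 2) P =
        MvPolynomial.C b * Polynomial.aeval
          (MvPolynomial.C a * MvPolynomial.X 0 + MvPolynomial.C b * MvPolynomial.X 1) f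
        + MvPolynomial.C c₂ ∧
      pderiv (0 : Fin 2) P =
        MvPolynomial.C a * Polynomial.aeval
          (MvPolynomial.C a * MvPolynomial.X 0 + MvPolynomial.C b * MvPolynomial.X 1) f
        - MvPolynomial.C c₁ :=
  stmt_11_general K P hhess
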